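/- Let G₁ and G₂ be finite clique-Helly simple graphs, each having at least two vertices and no isolated vertices. Then their Cartesian product G₁ □ G₂ is K-periodic, i.e., Kⁿ(G₁ □ G₂) ≅ G₁ □ G₂ for some positive integer n. -/

import Mathlib

open SimpleGraph

universe u v

/-- A clique (maximal complete subgraph) of `G`, viewed as a vertex set. -/
def IsMaxClique {V : Type u} (G : SimpleGraph V) (s : Set V) : Prop :=
  G.IsClique s ∧ ∀ t : Set V, G.IsClique t → s ⊆ t → s = t

/-- The set of all cliques (maximal complete subgraphs) of `G`. -/
def maxCliques {V : Type u} (G : SimpleGraph V) : Set (Set V) :=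
  {s | IsMaxClique G s}

/-- The clique graph `K(G)`: vertices are the cliques of `G`, two distinct cliques
being adjacent iff they intersect. -/
def cliqueGraph {V : Type u} (G : SimpleGraph V) : SimpleGraph ↥(maxCliques G) where
  Adj Q R := Q ≠ R ∧ ((Q : Set V) ∩ (R : Set V)).Nonempty
  symm := by
    constructor
    intro Q R h
    refine ⟨h.1.symm, ?_⟩
    rw [Set.inter_comm]
    exact h.2
  loopless := ⟨fun Q h => h.1 rfl⟩

/-- A graph is complete iff any two distinct vertices are adjacent. -/
def IsCompleteGraph {V : Type u} (G : SimpleGraph V) : Prop :=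
  ∀ x y : V, x ≠ y → G.Adj x y

/-- The join `G₁ + G₂` of two graphs on disjoint vertex sets: all edges of `G₁`
and of `G₂`, plus all edges between the two vertex sets. -/
def joinGraph {V₁ : Type u} {V₂ : Type v} (G₁ : SimpleGraph V₁) (G₂ : SimpleGraph V₂) :
    SimpleGraph (V₁ ⊕ V₂) where
  Adj x y :=
    match x, y with
    | Sum.inl a, Sum.inl b => G₁.Adj a b
    | Sum.inr a, Sum.inr b => G₂.Adj a b
    | Sum.inl _, Sum.inr _ => True
    | Sum.inr _, Sum.inl _ => True
  symm := by constructor; rintro (a | a) (b | b) h <;> first | exact h.symm | trivial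
  loopless := by constructor; rintro (a | a) h <;> exact (SimpleGraph.irrefl _) h

/-- A finite simple graph bundled with its vertex type. -/
structure BGraph : Type (u + 1) where
  V : Type u
  [finV : Finite V]
  graph : SimpleGraph V

attribute [instance] BGraph.finV

/-- Bundle a finite simple graph. -/
def BGraph.of {V : Type u} [Finite V] (G : SimpleGraph V) : BGraph.{u} :=
  { V := V, graph := G }

/-- The bundled clique graph operator `K`; iterated clique graphs are `KB^[n]`. -/
def KB : BGraph.{u} → BGraph.{u} :=
  fun H => { V := ↥(maxCliques H.graph), graph := cliqueGraph H.graph }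

/-- A graph is `K`-convergent if its sequence of iterated clique graphs is finite
up to isomorphism, i.e. two of its iterated clique graphs are isomorphic. -/
def KConvergent (H : BGraph.{u}) : Prop :=
  ∃ m n : ℕ, m < n ∧ Nonempty ((KB^[n] H).graph ≃g (KB^[m] H).graph)

/-- A graph is `K`-periodic if `Kⁿ(G) ≅ G` for some `n > 0`. -/
def KPeriodic (H : BGraph.{u}) : Prop :=
  ∃ n : ℕ, 0 < n ∧ Nonempty ((KB^[n] H).graph ≃g H.graph)

/-- A graph is clique-Helly if every nonempty family of pairwise intersecting cliques
has nonempty total intersection. -/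
def CliqueHelly {V : Type u} (G : SimpleGraph V) : Prop :=
  ∀ F : Set (Set V), F.Nonempty → (∀ s ∈ F, s ∈ maxCliques G) →
    (∀ s ∈ F, ∀ t ∈ F, (s ∩ t).Nonempty) → (⋂ s ∈ F, s).Nonempty

/-!
For a clique-Helly graph `G`, every clique of `K(G)` is, by the Helly property, the star of all
cliques through some vertex. If moreover no vertex is dominated (`N[x] ⊆ N[y]` forces `x = y`),
the stars of distinct vertices are distinct and maximal, and `x ↦ star x` is an isomorphism
`G ≃ K²(G)`, so `G` is `K`-periodic with period dividing `2`.

Every clique of `G₁ □ G₂` lies in a row or a column, where it is a clique of a factor. A pairwise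
intersecting family of cliques either contains a row and a column, whose crossing point lies in
all its members, or lies in a single line, where the Helly property of the factor applies; so
`G₁ □ G₂` is clique-Helly. Without isolated vertices in the factors, no vertex of `G₁ □ G₂` is
dominated.
-/

section MaxCliques

variable {V W : Type*} {G : SimpleGraph V} {H : SimpleGraph W}

theorem isMaxClique_iff_maximal {s : Set V} : IsMaxClique G s ↔ Maximal G.IsClique s :=
  and_congr_right fun _ =>
    ⟨fun h _ ht hst => (h _ ht hst).ge, fun h _ ht hst => hst.antisymm (h ht hst)⟩

theorem exists_mem_maxCliques_superset [Finite V] {s : Set V} (hs : G.IsClique s) :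
    ∃ C ∈ maxCliques G, s ⊆ C := by
  obtain ⟨C, hsC, hC⟩ := Finite.exists_le_maximal hs
  exact ⟨C, isMaxClique_iff_maximal.2 hC, hsC⟩

theorem nonempty_of_mem_maxCliques [Nonempty V] {C : Set V} (hC : C ∈ maxCliques G) :
    C.Nonempty := by
  obtain ⟨x⟩ := ‹Nonempty V›
  rw [Set.nonempty_iff_ne_empty]
  rintro rfl
  exact Set.singleton_ne_empty x (hC.2 {x} (G.isClique_singleton x) (Set.empty_subset _)).symm

theorem isClique_image_iff (f : G ↪g H) {s : Set V} : H.IsClique (f '' s) ↔ G.IsClique s := by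
  rw [IsClique, f.injective.injOn.pairwise_image]
  exact ⟨fun h => h.mono' fun _ _ => f.map_adj_iff.1, fun h => h.mono' fun _ _ => f.map_adj_iff.2⟩

theorem preimage_mem_maxCliques (f : G ↪g H) {s : Set W} (hs : s ∈ maxCliques H)
    (hsf : s ⊆ Set.range f) : f ⁻¹' s ∈ maxCliques G := by
  have himage : f '' (f ⁻¹' s) = s := Set.image_preimage_eq_of_subset hsf
  refine ⟨(isClique_image_iff f).1 (by rw [himage]; exact hs.1), fun t ht hst => hst.antisymm ?_⟩
  have hs_eq : s = f '' t :=
    hs.2 _ ((isClique_image_iff f).2 ht) (himage ▸ Set.image_mono hst)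
  rw [hs_eq, Set.preimage_image_eq _ f.injective]

theorem CliqueHelly.inter_nonempty_of_subset_range (hG : CliqueHelly G) (f : G ↪g H)
    {F : Set (Set W)} (hF : F.Nonempty) (hmax : ∀ s ∈ F, s ∈ maxCliques H)
    (hsf : ∀ s ∈ F, s ⊆ Set.range f) (hpair : ∀ s ∈ F, ∀ t ∈ F, (s ∩ t).Nonempty) :
    (⋂ s ∈ F, s).Nonempty := by
  obtain ⟨x, hx⟩ := hG ((f ⁻¹' ·) '' F) (hF.image _)
    (by rintro _ ⟨s, hs, rfl⟩; exact preimage_mem_maxCliques f (hmax s hs) (hsf s hs))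
    (by
      rintro _ ⟨s, hs, rfl⟩ _ ⟨t, ht, rfl⟩
      exact (hpair s hs t ht).preimage' (Set.inter_subset_left.trans (hsf s hs)))
  simp only [Set.mem_iInter₂, Set.forall_mem_image, Set.mem_preimage] at hx
  exact ⟨f x, Set.mem_iInter₂.2 hx⟩

end MaxCliques

section CliqueStar

variable {V : Type*} {G : SimpleGraph V}

def cliqueStar (G : SimpleGraph V) (x : V) : Set (maxCliques G) :=
  {C | x ∈ (C : Set V)}

def NoDominatedVertices (G : SimpleGraph V) : Prop :=
  ∀ x y, insert x (G.neighborSet x) ⊆ insert y (G.neighborSet y) → x = y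

theorem isClique_cliqueStar (x : V) : (cliqueGraph G).IsClique (cliqueStar G x) :=
  fun _ hC _ hD hCD => ⟨hCD, x, hC, hD⟩

variable [Finite V]

theorem closedNeighborSet_subset_of_cliqueStar_subset {x y : V}
    (h : cliqueStar G x ⊆ cliqueStar G y) :
    insert x (G.neighborSet x) ⊆ insert y (G.neighborSet y) := by
  intro z hz
  have hxz : G.IsClique {x, z} := isClique_pair.2 fun hne => hz.resolve_left hne.symm
  obtain ⟨C, hC, hxzC⟩ := exists_mem_maxCliques_superset hxz
  have hyC : y ∈ C := h (a := ⟨C, hC⟩) (hxzC (Set.mem_insert x _))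
  have hzC : z ∈ C := hxzC (Set.mem_insert_of_mem x rfl)
  rcases eq_or_ne y z with rfl | hyz
  · exact Set.mem_insert y _
  · exact Set.mem_insert_of_mem y (hC.1 hyC hzC hyz)

theorem NoDominatedVertices.cliqueStar_injective (hG : NoDominatedVertices G) :
    Function.Injective (cliqueStar G) :=
  fun x y h => hG x y (closedNeighborSet_subset_of_cliqueStar_subset h.le)

theorem cliqueStar_ne_and_inter_nonempty_iff (hG : NoDominatedVertices G) {x y : V} :
    (cliqueStar G x ≠ cliqueStar G y ∧ (cliqueStar G x ∩ cliqueStar G y).Nonempty) ↔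
      G.Adj x y := by
  constructor
  · rintro ⟨hne, C, hxC, hyC⟩
    exact C.2.1 hxC hyC fun hxy => hne (congrArg _ hxy)
  · intro hxy
    obtain ⟨C, hC, hxyC⟩ := exists_mem_maxCliques_superset (isClique_pair.2 fun _ => hxy)
    exact ⟨hG.cliqueStar_injective.ne hxy.ne,
      ⟨C, hC⟩, hxyC (Set.mem_insert x _), hxyC (Set.mem_insert_of_mem x rfl)⟩

variable [Nonempty V]

theorem CliqueHelly.exists_eq_cliqueStar (hG : CliqueHelly G)
    {F : Set (maxCliques G)} (hF : F ∈ maxCliques (cliqueGraph G)) :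
    ∃ x, F = cliqueStar G x := by
  have : Nonempty (maxCliques G) := by
    obtain ⟨C, hC, -⟩ := exists_mem_maxCliques_superset G.isClique_empty
    exact ⟨⟨C, hC⟩⟩
  have hpair : ∀ s ∈ Subtype.val '' F, ∀ t ∈ Subtype.val '' F, (s ∩ t).Nonempty := by
    rintro _ ⟨C, hC, rfl⟩ _ ⟨D, hD, rfl⟩
    rcases eq_or_ne C D with rfl | hCD
    · rw [Set.inter_self]
      exact nonempty_of_mem_maxCliques C.2
    · exact (hF.1 hC hD hCD).2
  obtain ⟨x, hx⟩ := hG _ ((nonempty_of_mem_maxCliques hF).image _)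
    (by rintro _ ⟨C, -, rfl⟩; exact C.2) hpair
  simp only [Set.mem_iInter₂, Set.forall_mem_image] at hx
  exact ⟨x, hF.2 _ (isClique_cliqueStar x) hx⟩

theorem cliqueStar_mem_maxCliques (hH : CliqueHelly G) (hG : NoDominatedVertices G) (x : V) :
    cliqueStar G x ∈ maxCliques (cliqueGraph G) := by
  obtain ⟨F, hF, hxF⟩ := exists_mem_maxCliques_superset (isClique_cliqueStar (G := G) x)
  obtain ⟨y, rfl⟩ := hH.exists_eq_cliqueStar hF
  obtain rfl := hG x y (closedNeighborSet_subset_of_cliqueStar_subset hxF)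
  exact hF

noncomputable def cliqueStarIso (hH : CliqueHelly G) (hG : NoDominatedVertices G) :
    G ≃g cliqueGraph (cliqueGraph G) where
  toEquiv := Equiv.ofBijective (fun x => ⟨cliqueStar G x, cliqueStar_mem_maxCliques hH hG x⟩)
    ⟨fun _ _ h => hG.cliqueStar_injective (congrArg Subtype.val h), fun F => by
      obtain ⟨x, hx⟩ := hH.exists_eq_cliqueStar F.2
      exact ⟨x, Subtype.ext hx.symm⟩⟩
  map_rel_iff' := (and_congr_left' Subtype.ext_iff.not).trans
    (cliqueStar_ne_and_inter_nonempty_iff hG)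

theorem kPeriodic_of_cliqueHelly (hH : CliqueHelly G) (hG : NoDominatedVertices G) :
    KPeriodic (BGraph.of G) :=
  ⟨2, two_pos, ⟨(cliqueStarIso hH hG).symm⟩⟩

end CliqueStar

section BoxProd

variable {α β : Type*} {G₁ : SimpleGraph α} {G₂ : SimpleGraph β}

theorem range_boxProdLeft (b : β) : Set.range (boxProdLeft G₁ G₂ b) = Prod.snd ⁻¹' {b} := by
  ext ⟨x, y⟩
  simp [eq_comm]

theorem range_boxProdRight (a : α) : Set.range (boxProdRight G₁ G₂ a) = Prod.fst ⁻¹' {a} := by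
  ext ⟨x, y⟩
  simp [eq_comm]

theorem SimpleGraph.IsClique.subset_snd_preimage_or_subset_fst_preimage {s : Set (α × β)}
    (hs : (G₁ □ G₂).IsClique s) {x : α × β} (hx : x ∈ s) :
    s ⊆ Prod.snd ⁻¹' {x.2} ∨ s ⊆ Prod.fst ⁻¹' {x.1} := by
  by_contra! h
  obtain ⟨⟨y, hys, hy⟩, ⟨z, hzs, hz⟩⟩ := And.imp Set.not_subset.1 Set.not_subset.1 h
  simp only [Set.mem_preimage, Set.mem_singleton_iff] at hy hz
  have hyx := hs hys hx fun h => hy (h ▸ rfl)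
  have hzx := hs hzs hx fun h => hz (h ▸ rfl)
  have hyz := hs hys hzs fun h => hz (h ▸ (hyx.resolve_left fun h' => hy h'.2).2)
  simp only [boxProd_adj] at hyx hzx hyz
  aesop

theorem mk_mem_of_inter_nonempty {s C D : Set (α × β)} {u : α} {v : β}
    (hs : (∃ v', s ⊆ Prod.snd ⁻¹' {v'}) ∨ ∃ u', s ⊆ Prod.fst ⁻¹' {u'})
    (hC : C ⊆ Prod.snd ⁻¹' {v}) (hD : D ⊆ Prod.fst ⁻¹' {u})
    (hsC : (s ∩ C).Nonempty) (hsD : (s ∩ D).Nonempty) : (u, v) ∈ s := by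
  obtain ⟨p, hps, hpC⟩ := hsC
  obtain ⟨q, hqs, hqD⟩ := hsD
  rcases hs with ⟨v', hv'⟩ | ⟨u', hu'⟩
  · convert hqs using 1
    exact Prod.ext (hD hqD).symm ((hC hpC).symm.trans ((hv' hps).trans (hv' hqs).symm))
  · convert hps using 1
    exact Prod.ext ((hD hqD).symm.trans ((hu' hqs).trans (hu' hps).symm)) (hC hpC).symm

theorem CliqueHelly.boxProd (h₁ : CliqueHelly G₁) (h₂ : CliqueHelly G₂) :
    CliqueHelly (G₁ □ G₂) := by
  intro F hF hmax hpair
  have hline : ∀ s ∈ F, (∃ v, s ⊆ Prod.snd ⁻¹' {v}) ∨ ∃ u, s ⊆ Prod.fst ⁻¹' {u} := by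
    intro s hs
    obtain ⟨x, hx⟩ := Set.inter_self s ▸ hpair s hs s hs
    exact ((hmax s hs).1.subset_snd_preimage_or_subset_fst_preimage hx).imp
      (⟨_, ·⟩) (⟨_, ·⟩)
  -- A row and a column of `F` cross in a point common to all members; otherwise all of `F`
  -- lies in one line, a copy of a factor.
  by_cases hmixed : ∃ C ∈ F, ∃ D ∈ F, ∃ u v, C ⊆ Prod.snd ⁻¹' {v} ∧ D ⊆ Prod.fst ⁻¹' {u}
  · obtain ⟨C, hCF, D, hDF, u, v, hC, hD⟩ := hmixed
    exact ⟨(u, v), Set.mem_iInter₂.2 fun s hs =>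
      mk_mem_of_inter_nonempty (hline s hs) hC hD (hpair s hs C hCF) (hpair s hs D hDF)⟩
  push Not at hmixed
  obtain ⟨s₀, hs₀⟩ := hF
  rcases hline s₀ hs₀ with ⟨v, hv⟩ | ⟨u, hu⟩
  · refine h₁.inter_nonempty_of_subset_range (boxProdLeft G₁ G₂ v) ⟨s₀, hs₀⟩ hmax
      (fun s hs => ?_) hpair
    rw [range_boxProdLeft]
    obtain ⟨v', hv'⟩ | ⟨u, hu⟩ := hline s hs
    · obtain ⟨p, hps, hp₀⟩ := hpair s hs s₀ hs₀
      obtain rfl : v' = v := (hv' hps).symm.trans (hv hp₀)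
      exact hv'
    · exact absurd hu (hmixed s₀ hs₀ s hs u v hv)
  · refine h₂.inter_nonempty_of_subset_range (boxProdRight G₁ G₂ u) ⟨s₀, hs₀⟩ hmax
      (fun s hs => ?_) hpair
    rw [range_boxProdRight]
    obtain ⟨v, hv⟩ | ⟨u', hu'⟩ := hline s hs
    · exact absurd hu (hmixed s hs s₀ hs₀ u v hv)
    · obtain ⟨p, hps, hp₀⟩ := hpair s hs s₀ hs₀
      obtain rfl : u' = u := (hu' hps).symm.trans (hu hp₀)
      exact hu'

/-- If `(a, b) ~ (a', b)`, a neighbour `(a, b'')` of `(a, b)` is not in `N[(a', b)]`. -/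
theorem noDominatedVertices_boxProd (h₁ : ∀ a : α, ∃ a', G₁.Adj a a')
    (h₂ : ∀ b : β, ∃ b', G₂.Adj b b') : NoDominatedVertices (G₁ □ G₂) := by
  rintro ⟨a, b⟩ ⟨a', b'⟩ hN
  rcases hN (Set.mem_insert _ _) with h | hadj
  · exact h
  obtain ⟨a'', ha''⟩ := h₁ a
  obtain ⟨b'', hb''⟩ := h₂ b
  have hleft := hN <| Set.mem_insert_of_mem _
    (boxProd_adj_left.2 ha'' : (G₁ □ G₂).Adj (a, b) (a'', b))
  have hright := hN <| Set.mem_insert_of_mem _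
    (boxProd_adj_right.2 hb'' : (G₁ □ G₂).Adj (a, b) (a, b''))
  simp only [Set.mem_insert_iff, mem_neighborSet, boxProd_adj, Prod.mk.injEq] at hadj hleft hright
  rcases hadj with ⟨hadj, rfl⟩ | ⟨hadj, rfl⟩
  · rcases hright with ⟨rfl, rfl⟩ | ⟨h, rfl⟩ | ⟨h, rfl⟩ <;> simp_all
  · rcases hleft with ⟨rfl, rfl⟩ | ⟨h, rfl⟩ | ⟨h, rfl⟩ <;> simp_all

end BoxProd

/-- The Cartesian product of two finite clique-Helly graphs, each with at least two
vertices and no isolated vertices, is `K`-periodic. -/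
theorem kPeriodic_boxProd {V₁ V₂ : Type u} [Finite V₁] [Finite V₂]
    [Nontrivial V₁] [Nontrivial V₂] (G₁ : SimpleGraph V₁) (G₂ : SimpleGraph V₂)
    (hH₁ : CliqueHelly G₁) (hH₂ : CliqueHelly G₂)
    (hiso₁ : ∀ v : V₁, ∃ u : V₁, G₁.Adj v u) (hiso₂ : ∀ v : V₂, ∃ u : V₂, G₂.Adj v u) :
    KPeriodic (BGraph.of (G₁ □ G₂)) :=
  kPeriodic_of_cliqueHelly (hH₁.boxProd hH₂) (noDominatedVertices_boxProd hiso₁ hiso₂)
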